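/- arXiv:1806.02365 — 4 statements merged into one kernel-verified Lean document; each statement's English description precedes it below -/
import Mathlib

section
/- Let R₀ > 0 and f:(0,∞)→ℂ measurable. Then ‖∫_r^∞ f(r') dr'‖_{L²_e((R₀,∞))} ≤ ‖f‖_{L¹_e((R₀,∞))}, where ‖g‖_{L²_e(I)} = (∫_I |g|² r dr)^{1/2} and ‖g‖_{L¹_e(I)} = ∫_I |g| r dr. -/
/-!
With `G r = ∫_r^∞ |f|` and `M = ∫_{R₀}^∞ |f s| s ds` one has `|∫_r^∞ f| ≤ G r` and `r G r ≤ M`,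
hence `|∫_r^∞ f|² r ≤ M G r`; by Tonelli `∫_{R₀}^∞ G = ∫_{R₀}^∞ |f s| (s - R₀) ds ≤ M`.
The estimate is carried out in `ℝ≥0∞`, so no integrability of the left-hand side is needed.
-/

open MeasureTheory Set Filter
open scoped ENNReal

theorem lintegral_Ioi_lintegral_Ioi {a : ℝ} {ψ : ℝ → ℝ≥0∞}
    (hψ : AEMeasurable ψ (volume.restrict (Ioi a))) :
    ∫⁻ r in Ioi a, ∫⁻ s in Ioi r, ψ s = ∫⁻ s in Ioi a, ψ s * ENNReal.ofReal (s - a) := by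
  have h_tail : ∀ r ∈ Ioi a, ∫⁻ s in Ioi r, ψ s = ∫⁻ s in Ioi a, (Ioi r).indicator ψ s := by
    intro r hr
    rw [lintegral_indicator measurableSet_Ioi, Measure.restrict_restrict measurableSet_Ioi,
      inter_eq_left.2 (Ioi_subset_Ioi (le_of_lt hr))]
  have h_meas : AEMeasurable (Function.uncurry fun r s => (Ioi r).indicator ψ s)
      ((volume.restrict (Ioi a)).prod (volume.restrict (Ioi a))) :=
    (hψ.comp_quasiMeasurePreserving Measure.quasiMeasurePreserving_snd).indicator
      (measurableSet_lt measurable_fst measurable_snd)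
  rw [setLIntegral_congr_fun measurableSet_Ioi h_tail, lintegral_lintegral_swap h_meas]
  refine setLIntegral_congr_fun measurableSet_Ioi fun s _ => ?_
  -- both indicators unfold to `if r < s then ψ s else 0`
  change ∫⁻ r in Ioi a, (Iio s).indicator (fun _ => ψ s) r = _
  rw [lintegral_indicator_const measurableSet_Iio, Measure.restrict_apply measurableSet_Iio,
    Iio_inter_Ioi, Real.volume_Ioo, mul_comm]

theorem ofReal_mul_lintegral_Ioi_le (r : ℝ) (ψ : ℝ → ℝ≥0∞) :
    ENNReal.ofReal r * ∫⁻ s in Ioi r, ψ s ≤ ∫⁻ s in Ioi r, ψ s * ENNReal.ofReal s := by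
  rw [mul_comm, ← lintegral_mul_const' _ _ ENNReal.ofReal_ne_top]
  exact setLIntegral_mono' measurableSet_Ioi fun s hs => by gcongr; exact hs.le

theorem lintegral_Ioi_sq_lintegral_Ioi_mul_le {a : ℝ} (ha : 0 ≤ a) {ψ : ℝ → ℝ≥0∞}
    (hψ : AEMeasurable ψ (volume.restrict (Ioi a))) :
    ∫⁻ r in Ioi a, (∫⁻ s in Ioi r, ψ s) ^ 2 * ENNReal.ofReal r ≤
      (∫⁻ s in Ioi a, ψ s * ENNReal.ofReal s) ^ 2 := by
  set G : ℝ → ℝ≥0∞ := fun r => ∫⁻ s in Ioi r, ψ s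
  set M := ∫⁻ s in Ioi a, ψ s * ENNReal.ofReal s
  have hG_anti : Antitone G := fun r r' h => lintegral_mono_set (Ioi_subset_Ioi h)
  have hG_int : ∫⁻ r in Ioi a, G r ≤ M := by
    rw [lintegral_Ioi_lintegral_Ioi hψ]
    exact setLIntegral_mono' measurableSet_Ioi fun s _ => by gcongr; linarith
  calc ∫⁻ r in Ioi a, G r ^ 2 * ENNReal.ofReal r ≤ ∫⁻ r in Ioi a, G r * M := by
        refine setLIntegral_mono' measurableSet_Ioi fun r hr => ?_
        calc G r ^ 2 * ENNReal.ofReal r = G r * (ENNReal.ofReal r * G r) := by ring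
          _ ≤ G r * M := by
            gcongr
            exact (ofReal_mul_lintegral_Ioi_le r ψ).trans
              (lintegral_mono_set (Ioi_subset_Ioi hr.le))
    _ = (∫⁻ r in Ioi a, G r) * M := lintegral_mul_const _ hG_anti.measurable
    _ ≤ M ^ 2 := by rw [sq]; gcongr

theorem aemeasurable_enorm_of_integrableOn_norm_mul {E : Type*} [NormedAddCommGroup E] {a : ℝ}
    (ha : 0 ≤ a) {f : ℝ → E} (hf : IntegrableOn (fun r => ‖f r‖ * r) (Ioi a)) :
    AEMeasurable (fun s => ‖f s‖ₑ) (volume.restrict (Ioi a)) := by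
  have h_norm : AEMeasurable (fun s => ‖f s‖) (volume.restrict (Ioi a)) :=
    (hf.aemeasurable.mul measurable_inv.aemeasurable).congr <| by
      filter_upwards [ae_restrict_mem measurableSet_Ioi] with s hs
      simp [field, (ha.trans_lt hs).ne']
  simpa only [enorm_norm] using h_norm.enorm

theorem integral_Ioi_norm_integral_Ioi_sq_mul_le {E : Type*} [NormedAddCommGroup E]
    [NormedSpace ℝ E] {a : ℝ} (ha : 0 ≤ a) {f : ℝ → E}
    (hf : IntegrableOn (fun r => ‖f r‖ * r) (Ioi a)) :
    ∫ r in Ioi a, ‖∫ s in Ioi r, f s‖ ^ 2 * r ≤ (∫ r in Ioi a, ‖f r‖ * r) ^ 2 := by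
  set M := ∫ r in Ioi a, ‖f r‖ * r
  have hM_nonneg : 0 ≤ M := setIntegral_nonneg measurableSet_Ioi fun s hs =>
    mul_nonneg (norm_nonneg _) (ha.trans_lt hs).le
  have hM : ∫⁻ s in Ioi a, ‖f s‖ₑ * ENNReal.ofReal s = ENNReal.ofReal M := by
    rw [ofReal_integral_eq_lintegral_ofReal hf <| by
      filter_upwards [ae_restrict_mem measurableSet_Ioi] with s hs
      exact mul_nonneg (norm_nonneg _) (ha.trans_lt hs).le]
    simp only [ENNReal.ofReal_mul (norm_nonneg _), ofReal_norm]
  calc ∫ r in Ioi a, ‖∫ s in Ioi r, f s‖ ^ 2 * r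
      ≤ (∫⁻ r in Ioi a, ‖‖∫ s in Ioi r, f s‖ ^ 2 * r‖ₑ).toReal :=
        (Real.le_norm_self _).trans <| by
          simpa only [ofReal_norm] using norm_integral_le_lintegral_norm (G := ℝ) _
    _ ≤ (ENNReal.ofReal M ^ 2).toReal := by
      gcongr
      · finiteness
      rw [← hM]
      refine le_trans (setLIntegral_mono' measurableSet_Ioi fun r hr => ?_)
        (lintegral_Ioi_sq_lintegral_Ioi_mul_le ha
          (aemeasurable_enorm_of_integrableOn_norm_mul ha hf))
      rw [enorm_mul, enorm_pow, enorm_norm, Real.enorm_eq_ofReal (ha.trans_lt hr).le]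
      gcongr
      exact enorm_integral_le_lintegral_enorm _
    _ = M ^ 2 := by rw [← ENNReal.ofReal_pow hM_nonneg, ENNReal.toReal_ofReal (by positivity)]

/-- `‖∫_r^∞ f(r') dr'‖_{L²_e((R₀,∞))} ≤ ‖f‖_{L¹_e((R₀,∞))}` where `L^p_e` is `L^p(r dr)`. -/
theorem stmt_2 (R₀ : ℝ) (hR₀ : 0 < R₀) (f : ℝ → ℂ)
    (hf : IntegrableOn (fun r => ‖f r‖ * r) (Ioi R₀)) :
    Real.sqrt (∫ r in Ioi R₀, ‖∫ s in Ioi r, f s‖ ^ 2 * r) ≤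
      ∫ r in Ioi R₀, ‖f r‖ * r :=
  (Real.sqrt_le_left (setIntegral_nonneg measurableSet_Ioi fun _ hs =>
    mul_nonneg (norm_nonneg _) (hR₀.trans hs).le)).2
    (integral_Ioi_norm_integral_Ioi_sq_mul_le hR₀.le hf)
end

section
/- For any m-equivariant map u = e^{mθR} v(r) : ℝ² → S² with v(0) = −k and v(∞) = k (where k = (0,0,1)) and finite energy, the energy satisfies E(u) = π ∫₀^∞ |∂_r v − (m/r)(v × (Rv))|² r dr + 4πm. In particular E(u) ≥ 4πm, with equality iff ∂_r v = (m/r) v × (Rv) almost everywhere. -/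
open MeasureTheory Set Real Filter Topology

/-!
Expanding the square, the cross product `v × Rv = (-v₁v₃, -v₂v₃, v₁² + v₂²)` satisfies
`|v × Rv|² = v₁² + v₂²` on the sphere, and `v' · (v × Rv) = v₃'` because `v' ⊥ v`. Hence the
integrand of the energy exceeds the squared defect by exactly `2m v₃'`, whose integral over
`(0, ∞)` is `2m (v₃(∞) - v₃(0)) = 4m` by the fundamental theorem of calculus.
-/

lemma sum_mul_eq_zero_of_hasDerivAt_of_sum_sq_eq {ι : Type*} [Fintype ι] {v : ℝ → ι → ℝ}
    {v' : ι → ℝ} {r c : ℝ} (hv : ∀ᶠ s in 𝓝 r, ∑ i, v s i ^ 2 = c)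
    (hd : ∀ i, HasDerivAt (fun s => v s i) (v' i) r) :
    ∑ i, v r i * v' i = 0 := by
  have hsum := HasDerivAt.fun_sum (u := Finset.univ) fun i _ => (hd i).pow 2
  have h := hsum.unique ((hasDerivAt_const r c).congr_of_eventuallyEq hv)
  simpa [mul_assoc, ← Finset.mul_sum] using h

lemma sum_sq_sub_mul_cross_rot {x y : Fin 3 → ℝ} (c : ℝ) (hx : ∑ i, x i ^ 2 = 1)
    (hxy : ∑ i, x i * y i = 0) :
    ∑ i, (y i - c * crossProduct x ![-(x 1), x 0, 0] i) ^ 2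
      = ∑ i, y i ^ 2 + c ^ 2 * (x 0 ^ 2 + x 1 ^ 2) - 2 * c * y 2 := by
  simp only [Fin.sum_univ_three, cross_apply, Matrix.cons_val_zero, Matrix.cons_val_one,
    Matrix.cons_val_two, Matrix.head_cons, Matrix.tail_cons] at hx hxy ⊢
  linear_combination (c ^ 2 * (x 0 ^ 2 + x 1 ^ 2) - 2 * c * y 2) * hx + 2 * c * x 2 * hxy

lemma integral_Ioi_of_hasDerivAt_of_tendsto_nhdsGT {E : Type*} [NormedAddCommGroup E]
    [NormedSpace ℝ E] [CompleteSpace E] {f f' : ℝ → E} {a : ℝ} {la lb : E}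
    (hderiv : ∀ x ∈ Ioi a, HasDerivAt f (f' x) x) (f'int : IntegrableOn f' (Ioi a))
    (ha : Tendsto f (𝓝[>] a) (𝓝 la)) (hb : Tendsto f atTop (𝓝 lb)) :
    ∫ x in Ioi a, f' x = lb - la := by
  let g := Function.update f a la
  have hg : ∀ x ∈ Ioi a, g x = f x := fun x hx => Function.update_of_ne hx.ne' _ _
  have hgcont : ContinuousWithinAt g (Ici a) a := by
    rwa [← continuousWithinAt_Ioi_iff_Ici, continuousWithinAt_update_same,
      sdiff_singleton_eq_self self_notMem_Ioi]
  have hgderiv : ∀ x ∈ Ioi a, HasDerivAt g (f' x) x := fun x hx =>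
    (hderiv x hx).congr_of_eventuallyEq <| eventually_of_mem (isOpen_Ioi.mem_nhds hx) hg
  have hgb : Tendsto g atTop (𝓝 lb) :=
    hb.congr' <| eventually_of_mem (Ioi_mem_atTop a) fun x hx => (hg x hx).symm
  rw [integral_Ioi_of_hasDerivAt_of_tendsto hgcont hgderiv f'int hgb]
  simp [g]

lemma setIntegral_Ioi_sum_sq_mul_eq_zero_iff {ι : Type*} [Fintype ι] {g : ℝ → ι → ℝ}
    (hint : IntegrableOn (fun r => (∑ i, g r i ^ 2) * r) (Ioi 0)) :
    ∫ r in Ioi (0:ℝ), (∑ i, g r i ^ 2) * r = 0 ↔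
      ∀ᵐ r ∂volume.restrict (Ioi 0), ∀ i, g r i = 0 := by
  have hnonneg : 0 ≤ᵐ[volume.restrict (Ioi 0)] fun r => (∑ i, g r i ^ 2) * r :=
    (ae_restrict_iff' measurableSet_Ioi).2 <| Eventually.of_forall fun r hr =>
      mul_nonneg (Finset.sum_nonneg fun i _ => sq_nonneg _) (le_of_lt hr)
  rw [setIntegral_eq_zero_iff_of_nonneg_ae hnonneg hint]
  refine eventually_congr <| (ae_restrict_mem measurableSet_Ioi).mono fun r (hr : 0 < r) => ?_
  simp [hr.ne', Finset.sum_eq_zero_iff_of_nonneg fun i _ => sq_nonneg (g r i)]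

/-- Energy identity for `m`-equivariant maps with `v(0⁺) = −k`, `v(∞) = k`:
`E(u) = π ∫₀^∞ |∂_r v − (m/r) v × Rv|² r dr + 4πm`, hence `E(u) ≥ 4πm` with equality iff
`∂_r v = (m/r) v × Rv` a.e. Here `Rv = (−v₂, v₁, 0)`. -/
theorem stmt_6 (m : ℕ) (hm : 1 ≤ m) (v v' : ℝ → Fin 3 → ℝ)
    (hsphere : ∀ r ∈ Ioi (0:ℝ), ∑ i, (v r i) ^ 2 = 1)
    (hderiv : ∀ r ∈ Ioi (0:ℝ), ∀ i, HasDerivAt (fun s => v s i) (v' r i) r)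
    (hv0 : Filter.Tendsto v (nhdsWithin 0 (Ioi 0)) (nhds ![0, 0, -1]))
    (hvinf : Filter.Tendsto v Filter.atTop (nhds ![0, 0, 1]))
    (hint1 : IntegrableOn (fun r =>
        ((∑ i, (v' r i) ^ 2) + (m : ℝ) ^ 2 * ((v r 0) ^ 2 + (v r 1) ^ 2) / r ^ 2) * r)
      (Ioi 0))
    (hint2 : IntegrableOn (fun r =>
        (∑ i, (v' r i - ((m : ℝ) / r) *
          crossProduct (v r) ![-(v r 1), v r 0, 0] i) ^ 2) * r) (Ioi 0)) :
    (π * ∫ r in Ioi (0:ℝ),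
        ((∑ i, (v' r i) ^ 2) + (m : ℝ) ^ 2 * ((v r 0) ^ 2 + (v r 1) ^ 2) / r ^ 2) * r
      = π * (∫ r in Ioi (0:ℝ),
          (∑ i, (v' r i - ((m : ℝ) / r) *
            crossProduct (v r) ![-(v r 1), v r 0, 0] i) ^ 2) * r) + 4 * π * m) ∧
    (4 * π * m ≤ π * ∫ r in Ioi (0:ℝ),
        ((∑ i, (v' r i) ^ 2) + (m : ℝ) ^ 2 * ((v r 0) ^ 2 + (v r 1) ^ 2) / r ^ 2) * r) ∧
    ((π * ∫ r in Ioi (0:ℝ),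
        ((∑ i, (v' r i) ^ 2) + (m : ℝ) ^ 2 * ((v r 0) ^ 2 + (v r 1) ^ 2) / r ^ 2) * r
      = 4 * π * m) ↔
      ∀ᵐ r ∂(volume.restrict (Ioi 0)), ∀ i,
        v' r i = ((m : ℝ) / r) * crossProduct (v r) ![-(v r 1), v r 0, 0] i) := by
  set A := fun r : ℝ =>
    ((∑ i, (v' r i) ^ 2) + (m : ℝ) ^ 2 * ((v r 0) ^ 2 + (v r 1) ^ 2) / r ^ 2) * r
  set B := fun r : ℝ =>
    (∑ i, (v' r i - ((m : ℝ) / r) * crossProduct (v r) ![-(v r 1), v r 0, 0] i) ^ 2) * r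
  have hAB : ∀ r ∈ Ioi (0:ℝ), A r - B r = 2 * m * v' r 2 := fun r hr => by
    have horth := sum_mul_eq_zero_of_hasDerivAt_of_sum_sq_eq
      (eventually_of_mem (isOpen_Ioi.mem_nhds hr) hsphere) (hderiv r hr)
    simp only [A, B, sum_sq_sub_mul_cross_rot _ (hsphere r hr) horth]
    field_simp [hr.out.ne']
    ring
  have hm0 : (2 * m : ℝ) ≠ 0 := by positivity
  have hv'int : IntegrableOn (fun r => v' r 2) (Ioi 0) :=
    IntegrableOn.congr_fun ((hint1.sub hint2).const_mul (2 * m : ℝ)⁻¹)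
      (fun r hr => by simp only [Pi.sub_apply, hAB r hr, inv_mul_cancel_left₀ hm0])
      measurableSet_Ioi
  have hcomp (F : Filter ℝ) (x : Fin 3 → ℝ) (h : Tendsto v F (𝓝 x)) :
      Tendsto (fun r => v r 2) F (𝓝 (x 2)) := ((continuous_apply 2).tendsto x).comp h
  have hftc : ∫ r in Ioi (0:ℝ), v' r 2 = 2 := by
    rw [integral_Ioi_of_hasDerivAt_of_tendsto_nhdsGT (fun r hr => hderiv r hr 2) hv'int
      (hcomp _ _ hv0) (hcomp _ _ hvinf)]
    simp only [Matrix.cons_val_two, Matrix.tail_cons, Matrix.head_cons]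
    norm_num
  have hmain : ∫ r in Ioi (0:ℝ), A r = (∫ r in Ioi (0:ℝ), B r) + 4 * m := by
    rw [← sub_eq_iff_eq_add', ← integral_sub hint1 hint2,
      setIntegral_congr_fun measurableSet_Ioi hAB, integral_const_mul, hftc]
    ring
  have hBnonneg : 0 ≤ ∫ r in Ioi (0:ℝ), B r := setIntegral_nonneg measurableSet_Ioi fun r hr =>
    mul_nonneg (Finset.sum_nonneg fun i _ => sq_nonneg _) (le_of_lt hr)
  refine ⟨by rw [hmain]; ring, by rw [hmain]; nlinarith [pi_pos], ?_⟩
  simp_rw [← sub_eq_zero (a := v' _ _)]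
  rw [← setIntegral_Ioi_sum_sq_mul_eq_zero_iff hint2, hmain]
  exact ⟨fun h => by nlinarith [pi_pos], fun h => by rw [h]; ring⟩
end

section
/- Let g ∈ L^∞((0,∞)) with ∂_r g ∈ L²((0,∞), r dr), and let φ ∈ H¹_e. Then gφ ∈ H¹_e and ‖gφ‖_{H¹_e} ≤ C(‖g‖_{L^∞} + ‖∂_r g‖_{L²_e})‖φ‖_{H¹_e} for a universal constant C. -/
open MeasureTheory Set Filter Topology

/-
The key point is the one-dimensional embedding `‖φ(a)‖² ≤ ‖φ‖²_{H¹_e}` for every `a > 0`: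
`‖φ‖²` has derivative `2 ⟪φ, φ'⟫`, which is bounded by `‖φ‖²/r + r ‖φ'‖²`, hence integrable
on `(a, ∞)`, and `‖φ‖²` tends to `0` at infinity because it is integrable there as well;
integrating the derivative from `a` to `∞` gives the bound. With `‖φ‖_∞² ≤ ‖φ‖²_{H¹_e}`, the
product rule `(gφ)' = g'φ + gφ'` bounds the energy density of `gφ` pointwise by
`2M² (energy density of φ) + 2 ‖φ‖²_{H¹_e} ‖g'‖² r`, and integrating gives the claim with `C = 2`.
-/

theorem aestronglyMeasurable_restrict_of_hasDerivAt {F : Type*} [NormedAddCommGroup F]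
    [NormedSpace ℝ F] [CompleteSpace F] {f f' : ℝ → F} {s : Set ℝ} (hs : MeasurableSet s)
    (hf : ∀ x ∈ s, HasDerivAt f (f' x) x) : AEStronglyMeasurable f' (volume.restrict s) := by
  refine (aestronglyMeasurable_deriv f _).congr ?_
  filter_upwards [ae_restrict_mem hs] with x hx
  exact (hf x hx).deriv

theorem integrableOn_of_nonneg_of_le {α : Type*} [MeasurableSpace α] {μ : Measure α}
    {f g : α → ℝ} {s : Set α} (hs : MeasurableSet s) (hg : IntegrableOn g s μ)
    (hf : AEStronglyMeasurable f (μ.restrict s)) (hfg : ∀ x ∈ s, 0 ≤ f x ∧ f x ≤ g x) :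
    IntegrableOn f s μ :=
  hg.mono' hf <| (ae_restrict_iff' hs).2 <| ae_of_all _ fun x hx => by
    rw [Real.norm_of_nonneg (hfg x hx).1]; exact (hfg x hx).2

theorem norm_sq_le_two_mul_integral_Ioi_of_hasDerivAt {E : Type*} [NormedAddCommGroup E]
    [InnerProductSpace ℝ E] {f f' : ℝ → E} {a : ℝ}
    (hf : ∀ x ∈ Ici a, HasDerivAt f (f' x) x)
    (hf_int : IntegrableOn (fun x => ‖f x‖ ^ 2) (Ioi a))
    (hff'_int : IntegrableOn (fun x => ‖f x‖ * ‖f' x‖) (Ioi a)) :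
    ‖f a‖ ^ 2 ≤ 2 * ∫ x in Ioi a, ‖f x‖ * ‖f' x‖ := by
  have hderiv : ∀ x ∈ Ici a, HasDerivAt (‖f ·‖ ^ 2) (2 * inner ℝ (f x) (f' x)) x :=
    fun x hx => (hf x hx).norm_sq
  have hderiv_Ioi : ∀ x ∈ Ioi a, HasDerivAt (‖f ·‖ ^ 2) (2 * inner ℝ (f x) (f' x)) x :=
    fun x hx => hderiv x (Ioi_subset_Ici_self hx)
  have hderiv_int : IntegrableOn (fun x => 2 * inner ℝ (f x) (f' x)) (Ioi a) := by
    refine (hff'_int.const_mul 2).mono'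
      (aestronglyMeasurable_restrict_of_hasDerivAt measurableSet_Ioi hderiv_Ioi) ?_
    refine ae_of_all _ fun x => ?_
    rw [norm_mul, Real.norm_two, Real.norm_eq_abs]
    gcongr
    exact abs_real_inner_le_norm _ _
  have hlim : Tendsto (‖f ·‖ ^ 2) atTop (𝓝 0) :=
    tendsto_zero_of_hasDerivAt_of_integrableOn_Ioi hderiv_Ioi hderiv_int hf_int
  have hftc := integral_Ioi_of_hasDerivAt_of_tendsto' hderiv hderiv_int hlim
  calc ‖f a‖ ^ 2 = ∫ x in Ioi a, -(2 * inner ℝ (f x) (f' x)) := by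
        rw [integral_neg, hftc]; ring
    _ ≤ ∫ x in Ioi a, 2 * (‖f x‖ * ‖f' x‖) := by
        refine integral_mono hderiv_int.neg (hff'_int.const_mul 2) fun x => ?_
        have := neg_le_of_abs_le (abs_real_inner_le_norm (f x) (f' x))
        linarith
    _ = 2 * ∫ x in Ioi a, ‖f x‖ * ‖f' x‖ := integral_const_mul _ _

/-- The integrand of `‖φ‖²_{H¹_e}`, with `φ'` standing for `∂_r φ`. -/
noncomputable def h1eDensity (φ φ' : ℝ → ℂ) (r : ℝ) : ℝ :=
  (‖φ r‖ ^ 2 + ‖φ' r‖ ^ 2 + ‖φ r / (r : ℂ)‖ ^ 2) * r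

section H1eDensity

variable {φ φ' : ℝ → ℂ}

theorem h1eDensity_nonneg {r : ℝ} (hr : 0 ≤ r) : 0 ≤ h1eDensity φ φ' r := by
  unfold h1eDensity; positivity

theorem h1eDensity_eq {r : ℝ} (hr : 0 < r) :
    h1eDensity φ φ' r = ‖φ r‖ ^ 2 * r + ‖φ' r‖ ^ 2 * r + ‖φ r‖ ^ 2 / r := by
  rw [h1eDensity, norm_div, Complex.norm_real, Real.norm_of_nonneg hr.le]
  field_simp

theorem norm_sq_le_h1eDensity {r : ℝ} (hr : 0 < r) : ‖φ r‖ ^ 2 ≤ h1eDensity φ φ' r := by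
  have hφr : ‖φ r‖ ^ 2 ≤ ‖φ r‖ ^ 2 * r + ‖φ r‖ ^ 2 / r := by
    rw [← sub_nonneg]
    have : ‖φ r‖ ^ 2 * r + ‖φ r‖ ^ 2 / r - ‖φ r‖ ^ 2 =
        ‖φ r‖ ^ 2 * ((r - 1) ^ 2 + r) / r := by
      field_simp; ring
    rw [this]; positivity
  rw [h1eDensity_eq hr]
  nlinarith [mul_nonneg (sq_nonneg ‖φ' r‖) hr.le]

theorem two_mul_norm_mul_norm_le_h1eDensity {r : ℝ} (hr : 0 < r) :
    2 * (‖φ r‖ * ‖φ' r‖) ≤ h1eDensity φ φ' r := by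
  have amgm : 2 * (‖φ r‖ * ‖φ' r‖) ≤ ‖φ' r‖ ^ 2 * r + ‖φ r‖ ^ 2 / r := by
    rw [← sub_nonneg]
    have : ‖φ' r‖ ^ 2 * r + ‖φ r‖ ^ 2 / r - 2 * (‖φ r‖ * ‖φ' r‖) =
        (‖φ' r‖ * r - ‖φ r‖) ^ 2 / r := by
      field_simp; ring
    rw [this]; positivity
  rw [h1eDensity_eq hr]
  nlinarith [mul_nonneg (sq_nonneg ‖φ r‖) hr.le]

theorem aestronglyMeasurable_h1eDensity {μ : Measure ℝ} (hφ : AEStronglyMeasurable φ μ)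
    (hφ' : AEStronglyMeasurable φ' μ) : AEStronglyMeasurable (h1eDensity φ φ') μ :=
  (((hφ.norm.pow 2).add (hφ'.norm.pow 2)).add
    ((hφ.div₀ Complex.continuous_ofReal.aestronglyMeasurable).norm.pow 2)).mul
    aestronglyMeasurable_id

theorem integrableOn_h1eDensity_of_le (hφ : ∀ r ∈ Ioi (0 : ℝ), HasDerivAt φ (φ' r) r)
    {G : ℝ → ℝ} (hG : IntegrableOn G (Ioi 0)) (hle : ∀ r ∈ Ioi 0, h1eDensity φ φ' r ≤ G r) :
    IntegrableOn (h1eDensity φ φ') (Ioi 0) := by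
  have hφc : ContinuousOn φ (Ioi 0) := fun r hr => (hφ r hr).continuousAt.continuousWithinAt
  exact integrableOn_of_nonneg_of_le measurableSet_Ioi hG
    (aestronglyMeasurable_h1eDensity (hφc.aestronglyMeasurable measurableSet_Ioi)
      (aestronglyMeasurable_restrict_of_hasDerivAt measurableSet_Ioi hφ))
    fun r hr => ⟨h1eDensity_nonneg hr.out.le, hle r hr⟩

theorem norm_sq_le_integral_h1eDensity (hφ : ∀ r ∈ Ioi (0 : ℝ), HasDerivAt φ (φ' r) r)
    (hφ_int : IntegrableOn (h1eDensity φ φ') (Ioi 0)) {a : ℝ} (ha : 0 < a) :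
    ‖φ a‖ ^ 2 ≤ ∫ r in Ioi 0, h1eDensity φ φ' r := by
  have hsub : Ioi a ⊆ Ioi 0 := Ioi_subset_Ioi ha.le
  have hφa : ∀ r ∈ Ici a, HasDerivAt φ (φ' r) r := fun r hr => hφ r (ha.trans_le hr)
  have hφc : ContinuousOn φ (Ioi a) := fun r hr =>
    (hφ r (hsub hr)).continuousAt.continuousWithinAt
  have hφm := hφc.aestronglyMeasurable (μ := volume) measurableSet_Ioi
  have hφ'm := aestronglyMeasurable_restrict_of_hasDerivAt measurableSet_Ioi
    fun r hr => hφa r (Ioi_subset_Ici_self hr)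
  have hφ_int' := hφ_int.mono_set hsub
  have hφ2_int : IntegrableOn (fun r => ‖φ r‖ ^ 2) (Ioi a) :=
    integrableOn_of_nonneg_of_le measurableSet_Ioi hφ_int' (hφm.norm.pow 2) fun r hr =>
      ⟨by positivity, norm_sq_le_h1eDensity (hsub hr)⟩
  have hφφ'_le : ∀ r ∈ Ioi a, ‖φ r‖ * ‖φ' r‖ ≤ h1eDensity φ φ' r := fun r hr => by
    have := two_mul_norm_mul_norm_le_h1eDensity (φ := φ) (φ' := φ') (hsub hr)
    have : 0 ≤ ‖φ r‖ * ‖φ' r‖ := by positivity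
    linarith
  have hφφ'_int : IntegrableOn (fun r => ‖φ r‖ * ‖φ' r‖) (Ioi a) :=
    integrableOn_of_nonneg_of_le measurableSet_Ioi hφ_int' (hφm.norm.mul hφ'm.norm) fun r hr =>
      ⟨by positivity, hφφ'_le r hr⟩
  calc ‖φ a‖ ^ 2 ≤ 2 * ∫ r in Ioi a, ‖φ r‖ * ‖φ' r‖ :=
        norm_sq_le_two_mul_integral_Ioi_of_hasDerivAt hφa hφ2_int hφφ'_int
    _ = ∫ r in Ioi a, 2 * (‖φ r‖ * ‖φ' r‖) := (integral_const_mul _ _).symm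
    _ ≤ ∫ r in Ioi a, h1eDensity φ φ' r :=
        setIntegral_mono_on (hφφ'_int.const_mul 2) hφ_int' measurableSet_Ioi
          fun r hr => two_mul_norm_mul_norm_le_h1eDensity (hsub hr)
    _ ≤ ∫ r in Ioi 0, h1eDensity φ φ' r :=
        setIntegral_mono_set hφ_int
          ((ae_restrict_iff' measurableSet_Ioi).2 <| ae_of_all _ fun r hr =>
            h1eDensity_nonneg hr.out.le)
          hsub.eventuallyLE

theorem h1eDensity_mul_le {g g' : ℝ → ℂ} {M I r : ℝ} (hr : 0 < r) (hg : ‖g r‖ ≤ M)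
    (hφI : ‖φ r‖ ^ 2 ≤ I) :
    h1eDensity (g * φ) (g' * φ + g * φ') r ≤
      2 * M ^ 2 * h1eDensity φ φ' r + 2 * I * (‖g' r‖ ^ 2 * r) := by
  have hg2 : ‖g r‖ ^ 2 ≤ M ^ 2 := pow_le_pow_left₀ (norm_nonneg _) hg 2
  have hprod :
      ‖g' r * φ r + g r * φ' r‖ ^ 2 ≤ 2 * ‖g' r‖ ^ 2 * I + 2 * M ^ 2 * ‖φ' r‖ ^ 2 := by
    have := norm_add_le (g' r * φ r) (g r * φ' r)
    rw [norm_mul, norm_mul] at this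
    nlinarith [sq_nonneg (‖g' r‖ * ‖φ r‖ - ‖g r‖ * ‖φ' r‖),
      norm_nonneg (g' r * φ r + g r * φ' r)]
  simp only [h1eDensity, Pi.mul_apply, Pi.add_apply, mul_div_assoc, norm_mul, mul_pow]
  have hsum :
      ‖g r‖ ^ 2 * ‖φ r‖ ^ 2 + ‖g' r * φ r + g r * φ' r‖ ^ 2 + ‖g r‖ ^ 2 * ‖φ r / r‖ ^ 2 ≤
      2 * M ^ 2 * (‖φ r‖ ^ 2 + ‖φ' r‖ ^ 2 + ‖φ r / r‖ ^ 2) + 2 * I * ‖g' r‖ ^ 2 := by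
    nlinarith [mul_le_mul_of_nonneg_right hg2 (sq_nonneg ‖φ r‖),
      mul_le_mul_of_nonneg_right hg2 (sq_nonneg ‖φ r / r‖), sq_nonneg M, sq_nonneg ‖φ r‖,
      sq_nonneg ‖φ r / r‖]
  nlinarith [mul_le_mul_of_nonneg_right hsum hr.le]

theorem integrableOn_h1eDensity_mul_and_integral_le {g g' : ℝ → ℂ} {M : ℝ}
    (hg : ∀ r ∈ Ioi (0 : ℝ), ‖g r‖ ≤ M) (hg' : ∀ r ∈ Ioi (0 : ℝ), HasDerivAt g (g' r) r)
    (hg'_int : IntegrableOn (fun r => ‖g' r‖ ^ 2 * r) (Ioi 0))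
    (hφ : ∀ r ∈ Ioi (0 : ℝ), HasDerivAt φ (φ' r) r)
    (hφ_int : IntegrableOn (h1eDensity φ φ') (Ioi 0)) :
    IntegrableOn (h1eDensity (g * φ) (g' * φ + g * φ')) (Ioi 0) ∧
      ∫ r in Ioi 0, h1eDensity (g * φ) (g' * φ + g * φ') r ≤
        2 * M ^ 2 * (∫ r in Ioi 0, h1eDensity φ φ' r) +
          2 * (∫ r in Ioi 0, h1eDensity φ φ' r) * ∫ r in Ioi 0, ‖g' r‖ ^ 2 * r := by
  set I := ∫ r in Ioi 0, h1eDensity φ φ' r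
  have hdom : ∀ r ∈ Ioi 0, h1eDensity (g * φ) (g' * φ + g * φ') r ≤
      2 * M ^ 2 * h1eDensity φ φ' r + 2 * I * (‖g' r‖ ^ 2 * r) := fun r hr =>
    h1eDensity_mul_le hr (hg r hr) (norm_sq_le_integral_h1eDensity hφ hφ_int hr)
  have hdom_int : IntegrableOn
      (fun r => 2 * M ^ 2 * h1eDensity φ φ' r + 2 * I * (‖g' r‖ ^ 2 * r)) (Ioi 0) :=
    (hφ_int.const_mul _).add (hg'_int.const_mul _)
  have hint : IntegrableOn (h1eDensity (g * φ) (g' * φ + g * φ')) (Ioi 0) :=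
    integrableOn_h1eDensity_of_le (fun r hr => (hg' r hr).mul (hφ r hr)) hdom_int hdom
  refine ⟨hint, (setIntegral_mono_on hint hdom_int measurableSet_Ioi hdom).trans_eq ?_⟩
  rw [integral_add (hφ_int.const_mul _) (hg'_int.const_mul _), integral_const_mul,
    integral_const_mul]

end H1eDensity

/-- If `g ∈ L^∞` with `∂_r g ∈ L²_e`, and `φ ∈ H¹_e`, then `gφ ∈ H¹_e` with
`‖gφ‖_{H¹_e} ≤ C(‖g‖_{L^∞} + ‖∂_r g‖_{L²_e}) ‖φ‖_{H¹_e}`. -/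
theorem stmt_10 :
    ∃ C > 0, ∀ (g g' φ φ' : ℝ → ℂ) (M : ℝ),
      (∀ r ∈ Ioi (0:ℝ), ‖g r‖ ≤ M) →
      (∀ r ∈ Ioi (0:ℝ), HasDerivAt g (g' r) r) →
      IntegrableOn (fun r => ‖g' r‖ ^ 2 * r) (Ioi 0) →
      (∀ r ∈ Ioi (0:ℝ), HasDerivAt φ (φ' r) r) →
      IntegrableOn (fun r =>
        (‖φ r‖ ^ 2 + ‖φ' r‖ ^ 2 + ‖φ r / (r : ℂ)‖ ^ 2) * r) (Ioi 0) →
      IntegrableOn (fun r =>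
          (‖g r * φ r‖ ^ 2 + ‖g' r * φ r + g r * φ' r‖ ^ 2 +
            ‖g r * φ r / (r : ℂ)‖ ^ 2) * r) (Ioi 0) ∧
      Real.sqrt (∫ r in Ioi (0:ℝ),
          (‖g r * φ r‖ ^ 2 + ‖g' r * φ r + g r * φ' r‖ ^ 2 +
            ‖g r * φ r / (r : ℂ)‖ ^ 2) * r) ≤
        C * (M + Real.sqrt (∫ r in Ioi (0:ℝ), ‖g' r‖ ^ 2 * r)) *
          Real.sqrt (∫ r in Ioi (0:ℝ),
            (‖φ r‖ ^ 2 + ‖φ' r‖ ^ 2 + ‖φ r / (r : ℂ)‖ ^ 2) * r) := by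
  refine ⟨2, two_pos, fun g g' φ φ' M hg hg' hg'_int hφ hφ_int => ?_⟩
  obtain ⟨hint, hle⟩ := integrableOn_h1eDensity_mul_and_integral_le hg hg' hg'_int hφ hφ_int
  refine ⟨hint, ?_⟩
  set I := ∫ r in Ioi 0, h1eDensity φ φ' r
  set J := ∫ r in Ioi 0, ‖g' r‖ ^ 2 * r
  have hM : 0 ≤ M := (norm_nonneg _).trans (hg 1 (mem_Ioi.2 one_pos))
  have hI : 0 ≤ I := setIntegral_nonneg measurableSet_Ioi fun r hr => h1eDensity_nonneg hr.out.le
  have hJ : 0 ≤ J := setIntegral_nonneg measurableSet_Ioi fun r hr =>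
    mul_nonneg (sq_nonneg _) hr.out.le
  have hle' : 2 * M ^ 2 * I + 2 * I * J ≤ (2 * (M + √J)) ^ 2 * I := by
    nlinarith [Real.sq_sqrt hJ, mul_nonneg (mul_nonneg hM (Real.sqrt_nonneg J)) hI,
      mul_nonneg (sq_nonneg M) hI]
  calc _ ≤ √((2 * (M + √J)) ^ 2 * I) := Real.sqrt_le_sqrt (hle.trans hle')
    _ = 2 * (M + √J) * √I := by
        rw [Real.sqrt_mul (sq_nonneg _), Real.sqrt_sq (by positivity)]
end

section
/- For m ∈ ℕ and f:(0,∞)→ℂ with f ∈ H¹_e, define S(f)(x) = e^{i(m+1)θ} f(r) in polar coordinates on ℝ². Then S(f) ∈ H¹(ℝ²) and ‖f‖_{H¹_e} is equivalent to ‖S(f)‖_{H¹(ℝ²)}; conversely if S(f) ∈ H¹(ℝ²) then f ∈ H¹_e. -/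
/-!
Away from the origin, `S(f)` is rotation-equivariant, `S(f)(x u) = u^(m+1) S(f)(x)` for `|u| = 1`,
and restricts to `e^{i(m+1)θ} f` along the ray through `x = r e^{iθ}`. Computing the gradient in the
orthonormal frame `e^{iθ}, i e^{iθ}` (which does not change `|∂_x F|² + |∂_y F|²`), the radial
derivative is `e^{i(m+1)θ} f'(r)` and the angular one is `i(m+1) S(f)(x) / r`, so
`|S f|² + |∇S f|² = |f|² + |f'|² + (m+1)²|f|²/r²` is a radial function. Integration of radial
functions in polar coordinates then gives both the integrability equivalence and the identity.
-/

open MeasureTheory Set Real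

/-- The `(m+1)`-equivariant extension `S(f)(x) = e^{i(m+1)θ} f(r)`, written via
`e^{iθ} = x/|x|` on `ℂ ≃ ℝ²`. -/
noncomputable def Smap (m : ℕ) (f : ℝ → ℂ) : ℂ → ℂ :=
  fun x => (x / (‖x‖ : ℂ)) ^ (m + 1) * f ‖x‖

/-- Squared gradient `|∂_x F|² + |∂_y F|²` of `F : ℂ → ℂ`. -/
noncomputable def gradSq (F : ℂ → ℂ) (x : ℂ) : ℝ :=
  ‖fderiv ℝ F x 1‖ ^ 2 + ‖fderiv ℝ F x Complex.I‖ ^ 2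

open Complex

namespace Complex

variable {E : Type*} [NormedAddCommGroup E] [NormedSpace ℝ E]

theorem integrable_fun_norm_iff {g : ℝ → E} :
    Integrable (fun x : ℂ => g ‖x‖) ↔ IntegrableOn (fun r => r • g r) (Ioi 0) := by
  simpa [finrank_real_complex] using integrable_fun_norm_addHaar (volume : Measure ℂ) (f := g)

theorem integral_fun_norm (g : ℝ → E) :
    ∫ x : ℂ, g ‖x‖ = (2 * π) • ∫ r in Ioi (0 : ℝ), r • g r := by
  rw [integral_fun_norm_addHaar (volume : Measure ℂ) g, finrank_real_complex]
  simp only [Measure.real, Complex.volume_ball, ENNReal.ofReal_one, one_pow, one_mul,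
    ENNReal.coe_toReal, NNReal.coe_real_pi, Nat.add_one_sub_one, pow_one, ofNat_smul_eq_nsmul,
    mul_smul]

end Complex

theorem ContinuousLinearMap.sq_norm_apply_one_add_sq_norm_apply_I (L : ℂ →L[ℝ] ℂ) {e : ℂ}
    (he : ‖e‖ = 1) : ‖L 1‖ ^ 2 + ‖L I‖ ^ 2 = ‖L e‖ ^ 2 + ‖L (I * e)‖ ^ 2 := by
  have hLe : L e = e.re • L 1 + e.im • L I := by
    rw [← map_smul, ← map_smul, ← map_add]
    congr 1
    simp
  have hLIe : L (I * e) = (-e.im) • L 1 + e.re • L I := by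
    rw [← map_smul, ← map_smul, ← map_add]
    congr 1
    simp [Complex.ext_iff]
  have he2 : e.re ^ 2 + e.im ^ 2 = 1 := by
    have h := Complex.sq_norm e
    rw [he, Complex.normSq_apply] at h
    linarith
  rw [hLe, hLIe]
  simp only [Complex.sq_norm, Complex.normSq_apply, Complex.add_re, Complex.add_im,
    Complex.real_smul, Complex.mul_re, Complex.mul_im, Complex.ofReal_re, Complex.ofReal_im]
  linear_combination (-(L 1).re ^ 2 - (L 1).im ^ 2 - (L I).re ^ 2 - (L I).im ^ 2) * he2

theorem HasDerivAt.fderiv_apply_eq {E F : Type*} [NormedAddCommGroup E] [NormedSpace ℝ E]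
    [NormedAddCommGroup F] [NormedSpace ℝ F] {g : E → F} {γ : ℝ → E} {t : ℝ} {v : E} {w : F}
    (hg : DifferentiableAt ℝ g (γ t)) (hγ : HasDerivAt γ v t) (hgγ : HasDerivAt (g ∘ γ) w t) :
    fderiv ℝ g (γ t) v = w :=
  (hg.hasFDerivAt.comp_hasDerivAt t hγ).unique hgγ

section Smap

variable (m : ℕ) (f : ℝ → ℂ)

theorem Smap_mul_of_norm_eq_one (x : ℂ) {u : ℂ} (hu : ‖u‖ = 1) :
    Smap m f (x * u) = u ^ (m + 1) * Smap m f x := by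
  simp only [Smap, norm_mul, hu, mul_one]
  ring

theorem Smap_ofReal_mul {s : ℝ} (hs : 0 < s) {u : ℂ} (hu : ‖u‖ = 1) :
    Smap m f (s * u) = u ^ (m + 1) * f s := by
  have hs' : (s : ℂ) ≠ 0 := by exact_mod_cast hs.ne'
  simp only [Smap, norm_mul, hu, mul_one, Complex.norm_real, Real.norm_of_nonneg hs.le]
  field_simp

theorem norm_Smap {x : ℂ} (hx : x ≠ 0) : ‖Smap m f x‖ = ‖f ‖x‖‖ := by
  have h0 : ‖x‖ ≠ 0 := norm_ne_zero_iff.mpr hx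
  simp [Smap, h0]

variable {m f}

theorem differentiableAt_Smap {x : ℂ} (hx : x ≠ 0) (hf : DifferentiableAt ℝ f ‖x‖) :
    DifferentiableAt ℝ (Smap m f) x := by
  have hnorm : DifferentiableAt ℝ (fun y : ℂ => ‖y‖) x := differentiableAt_id.norm ℝ hx
  have hnormC : DifferentiableAt ℝ (fun y : ℂ => (‖y‖ : ℂ)) x :=
    ofRealCLM.differentiableAt.comp x hnorm
  have hinv : DifferentiableAt ℝ (fun y : ℂ => (‖y‖ : ℂ)⁻¹) x := hnormC.inv (by simpa using hx)
  have hfn : DifferentiableAt ℝ (fun y : ℂ => f ‖y‖) x := hf.comp x hnorm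
  unfold Smap
  simp only [div_eq_mul_inv]
  fun_prop

theorem fderiv_Smap_radial {x d : ℂ} (hx : x ≠ 0) (hf : HasDerivAt f d ‖x‖) :
    fderiv ℝ (Smap m f) x (x / ‖x‖) = (x / ‖x‖) ^ (m + 1) * d := by
  set e : ℂ := x / ‖x‖
  have hr : 0 < ‖x‖ := norm_pos_iff.mpr hx
  have he : ‖e‖ = 1 := by simp [e, hr.ne']
  have hex : ((‖x‖ : ℝ) : ℂ) * e = x := by
    have : ((‖x‖ : ℝ) : ℂ) ≠ 0 := by exact_mod_cast hr.ne'
    simp only [e]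
    field_simp
  have hγ : HasDerivAt (fun s : ℝ => (s : ℂ) * e) e ‖x‖ := by
    simpa using (hasDerivAt_id ‖x‖).ofReal_comp.mul_const e
  have hcomp : HasDerivAt (Smap m f ∘ fun s : ℝ => (s : ℂ) * e) (e ^ (m + 1) * d) ‖x‖ := by
    refine (hf.const_mul (e ^ (m + 1))).congr_of_eventuallyEq ?_
    filter_upwards [Ioi_mem_nhds hr] with s hs
    exact Smap_ofReal_mul m f hs he
  have hdiff : DifferentiableAt ℝ (Smap m f) ((‖x‖ : ℂ) * e) := by
    rw [hex]
    exact differentiableAt_Smap hx hf.differentiableAt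
  simpa [hex] using HasDerivAt.fderiv_apply_eq (γ := fun s : ℝ => (s : ℂ) * e) hdiff hγ hcomp

theorem fderiv_Smap_angular {x : ℂ} (hS : DifferentiableAt ℝ (Smap m f) x) :
    fderiv ℝ (Smap m f) x (I * x) = (m + 1) * I * Smap m f x := by
  have hu : HasDerivAt (fun t : ℝ => Complex.exp (t * I)) I 0 := by
    simpa using ((hasDerivAt_id (0 : ℝ)).ofReal_comp.mul_const I).cexp
  have hγ : HasDerivAt (fun t : ℝ => x * Complex.exp (t * I)) (I * x) 0 := by
    simpa [mul_comm] using hu.const_mul x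
  have hcomp : HasDerivAt (Smap m f ∘ fun t : ℝ => x * Complex.exp (t * I))
      ((m + 1) * I * Smap m f x) 0 := by
    have h := (hu.pow (m + 1)).mul_const (Smap m f x)
    simp only [Nat.cast_add, Nat.cast_one, Complex.ofReal_zero, zero_mul, Complex.exp_zero,
      one_pow, mul_one] at h
    refine h.congr_of_eventuallyEq (Filter.Eventually.of_forall fun t => ?_)
    exact Smap_mul_of_norm_eq_one m f x (norm_exp_ofReal_mul_I t)
  simpa using HasDerivAt.fderiv_apply_eq (by simpa using hS) hγ hcomp

theorem gradSq_Smap {x d : ℂ} (hx : x ≠ 0) (hf : HasDerivAt f d ‖x‖) :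
    gradSq (Smap m f) x = ‖d‖ ^ 2 + ((m : ℝ) + 1) ^ 2 * ‖f ‖x‖‖ ^ 2 / ‖x‖ ^ 2 := by
  have hr : ‖x‖ ≠ 0 := norm_ne_zero_iff.mpr hx
  have he : ‖x / (‖x‖ : ℂ)‖ = 1 := by simp [hr]
  have hIe : I * (x / ‖x‖) = (‖x‖⁻¹ : ℝ) • (I * x) := by
    rw [Complex.real_smul]
    push_cast
    ring
  have hm : ‖((m : ℂ) + 1)‖ = (m : ℝ) + 1 := by exact_mod_cast Complex.norm_natCast (m + 1)
  rw [gradSq, ContinuousLinearMap.sq_norm_apply_one_add_sq_norm_apply_I _ he,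
    fderiv_Smap_radial hx hf, hIe, map_smul,
    fderiv_Smap_angular (differentiableAt_Smap hx hf.differentiableAt)]
  simp only [norm_smul, norm_mul, norm_pow, he, one_pow, one_mul, Complex.norm_I, mul_one, hm,
    norm_Smap m f hx, norm_inv, norm_norm]
  field_simp

end Smap

/-- `S(f) ∈ H¹(ℝ²)` iff `f ∈ H¹_e`, with the exact norm identity
`∫_{ℝ²} (|Sf|² + |∇Sf|²) = 2π ∫₀^∞ (|f|² + |∂_r f|² + (m+1)²|f|²/r²) r dr`. -/
theorem stmt_11 (m : ℕ) (f f' : ℝ → ℂ)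
    (hderiv : ∀ r ∈ Ioi (0:ℝ), HasDerivAt f (f' r) r) :
    (Integrable (fun x : ℂ => ‖Smap m f x‖ ^ 2 + gradSq (Smap m f) x) ↔
      IntegrableOn (fun r =>
        (‖f r‖ ^ 2 + ‖f' r‖ ^ 2 + ((m : ℝ) + 1) ^ 2 * ‖f r‖ ^ 2 / r ^ 2) * r) (Ioi 0)) ∧
    (∫ x : ℂ, (‖Smap m f x‖ ^ 2 + gradSq (Smap m f) x))
      = 2 * π * ∫ r in Ioi (0:ℝ),
          (‖f r‖ ^ 2 + ‖f' r‖ ^ 2 + ((m : ℝ) + 1) ^ 2 * ‖f r‖ ^ 2 / r ^ 2) * r := by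
  set G : ℝ → ℝ := fun r => ‖f r‖ ^ 2 + ‖f' r‖ ^ 2 + ((m : ℝ) + 1) ^ 2 * ‖f r‖ ^ 2 / r ^ 2
  have hG : (fun x : ℂ => ‖Smap m f x‖ ^ 2 + gradSq (Smap m f) x) =ᵐ[volume] fun x => G ‖x‖ := by
    filter_upwards [Measure.ae_ne volume 0] with x hx
    rw [norm_Smap m f hx, gradSq_Smap hx (hderiv _ (norm_pos_iff.mpr hx))]
    ring
  rw [integrable_congr hG, integral_congr_ae hG, Complex.integrable_fun_norm_iff,
    Complex.integral_fun_norm]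
  simp only [smul_eq_mul, mul_comm _ (G _)]
  exact ⟨Iff.rfl, rfl⟩
end
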